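/- Let E be a finite-dimensional real normed vector space and A : E → (E →L[ℝ] E →L[ℝ] E) a smooth map, with induced multiplication (X∘Y)(p) = A(p)(X(p))(Y(p)) and pencil of connections ∇_{λ,X}Y := ∇_X Y + λ X∘Y for λ ∈ ℝ. Then the following are equivalent: (a) for every λ ∈ ℝ, ∇_λ is torsionless and flat, i.e. ∇_{λ,X}Y − ∇_{λ,Y}X = [X,Y] and ∇_{λ,X}(∇_{λ,Y}Z) − ∇_{λ,Y}(∇_{λ,X}Z) − ∇_{λ,[X,Y]}Z = 0 for all smooth vector fields X,Y,Z; (b) A(p) is symmetric for every p, the multiplication ∘ is associative, and there exists a smooth map C : E → E with A(p)(v)(w) = (D²C)(p)(v,w) for all p,v,w (i.e. (E, ∘, ∇) is an F-manifold with a compatible flat structure). -/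

import Mathlib

open ContDiff

variable {E : Type*} [NormedAddCommGroup E] [NormedSpace ℝ E]

/-- Lie bracket of vector fields on a normed space:
`[X,Y](p) = (DY)(p)(X(p)) - (DX)(p)(Y(p))`. -/
noncomputable def lieB (X Y : E → E) : E → E :=
  fun p => fderiv ℝ Y p (X p) - fderiv ℝ X p (Y p)

/-- Multiplication on vector fields induced by a field of bilinear maps `A`:
`(X ∘ Y)(p) = A(p)(X(p))(Y(p))`. -/
noncomputable def mulA (A : E → (E →L[ℝ] E →L[ℝ] E)) (X Y : E → E) : E → E :=
  fun p => A p (X p) (Y p)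

/-- The pencil of connections `∇_{λ,X}Y := ∇_X Y + λ X∘Y`. -/
noncomputable def nabLam (A : E → (E →L[ℝ] E →L[ℝ] E)) (l : ℝ) (X Y : E → E) : E → E :=
  fun p => fderiv ℝ Y p (X p) + l • mulA A X Y p

/-!
Torsion and curvature of `∇_λ` are tensorial: the torsion is `λ (X∘Y - Y∘X)` and, by the symmetry
of second derivatives, the curvature `R_λ(X,Y)Z` is
`λ ((DA)(X)(Y,Z) - (DA)(Y)(X,Z)) + λ² (X∘(Y∘Z) - Y∘(X∘Z))`.
Comparing coefficients of `λ` and `λ²`, every `∇_λ` is torsionless and flat iff `∘` is commutative,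
satisfies `u∘(v∘w) = v∘(u∘w)` (for a commutative product, associativity) and `DA` is symmetric.
The last condition says that the closed 1-form `A` is exact, `A = DΦ` (Poincaré lemma); then
`DΦ = A` is symmetric, so `Φ = DC` in turn.
-/

theorem assoc_iff_left_comm_of_comm {M : Type*} (mul : M → M → M)
    (hcomm : ∀ u v, mul u v = mul v u) :
    (∀ u v w, mul (mul u v) w = mul u (mul v w)) ↔ ∀ u v w, mul u (mul v w) = mul v (mul u w) := by
  constructor
  · intro hassoc u v w
    rw [← hassoc, hcomm u v, hassoc]
  · intro hleft u v w
    rw [hcomm, hleft, hcomm w v]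

theorem eq_zero_of_forall_smul_add_mul_self_smul_eq_zero {M : Type*} [AddCommGroup M] [Module ℝ M]
    {a b : M} (h : ∀ l : ℝ, l • a + (l * l) • b = 0) : a = 0 ∧ b = 0 := by
  have h₁ := h 1
  have h₂ := h (-1)
  constructor
  · linear_combination (norm := module) (2⁻¹ : ℝ) • h₁ - (2⁻¹ : ℝ) • h₂
  · linear_combination (norm := module) (2⁻¹ : ℝ) • h₁ + (2⁻¹ : ℝ) • h₂

section Potential

variable {F : Type*} [NormedAddCommGroup F] [NormedSpace ℝ F]

theorem exists_contDiff_fderiv_eq_of_fderiv_symmetric [CompleteSpace F] {α : E → E →L[ℝ] F}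
    (hα : ContDiff ℝ ∞ α) (hsymm : ∀ p u v, fderiv ℝ α p u v = fderiv ℝ α p v u) :
    ∃ f : E → F, ContDiff ℝ ∞ f ∧ fderiv ℝ f = α := by
  obtain ⟨f, hf⟩ := convex_univ.exists_forall_hasFDerivAt_of_fderiv_symmetric isOpen_univ
    (hα.differentiable (by simp)).differentiableOn fun p _ => hsymm p
  have hfα : fderiv ℝ f = α := funext fun p => (hf p trivial).fderiv
  exact ⟨f, contDiff_infty_iff_fderiv.2 ⟨fun p => (hf p trivial).differentiableAt, hfα ▸ hα⟩, hfα⟩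

theorem exists_potential_iff_fderiv_symmetric [CompleteSpace F] {A : E → E →L[ℝ] E →L[ℝ] F}
    (hA : ContDiff ℝ ∞ A) (hAsymm : ∀ p u v, A p u v = A p v u) :
    (∃ C : E → F, ContDiff ℝ ∞ C ∧ ∀ p v w, A p v w = fderiv ℝ (fderiv ℝ C) p v w) ↔
      ∀ p u v, fderiv ℝ A p u v = fderiv ℝ A p v u := by
  constructor
  · rintro ⟨C, hC, hCA⟩ p u v
    have hA_eq : A = fderiv ℝ (fderiv ℝ C) := by
      ext p v w
      exact hCA p v w
    have hDC : ContDiff ℝ ∞ (fderiv ℝ C) := hC.fderiv_right (m := ∞) (by simp)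
    rw [hA_eq]
    exact hDC.contDiffAt.isSymmSndFDerivAt (by simpa using ENat.LEInfty.out) u v
  · intro hDA
    obtain ⟨Φ, hΦ, hDΦ⟩ := exists_contDiff_fderiv_eq_of_fderiv_symmetric hA hDA
    obtain ⟨C, hC, hDC⟩ := exists_contDiff_fderiv_eq_of_fderiv_symmetric hΦ
      fun p u v => by rw [hDΦ]; exact hAsymm p u v
    exact ⟨C, hC, fun p v w => by rw [hDC, hDΦ]⟩

end Potential

section Pencil

variable {A : E → E →L[ℝ] E →L[ℝ] E} {X Y Z : E → E}

theorem nabLam_sub_nabLam_apply (l : ℝ) (p : E) :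
    nabLam A l X Y p - nabLam A l Y X p
      = lieB X Y p + l • (A p (X p) (Y p) - A p (Y p) (X p)) := by
  simp only [nabLam, mulA, lieB, smul_sub]
  abel

theorem fderiv_nabLam_apply {p : E} (hA : DifferentiableAt ℝ A p) (hY : DifferentiableAt ℝ Y p)
    (hZ : DifferentiableAt ℝ Z p) (hDZ : DifferentiableAt ℝ (fderiv ℝ Z) p) (l : ℝ) (u : E) :
    fderiv ℝ (nabLam A l Y Z) p u
      = fderiv ℝ (fderiv ℝ Z) p u (Y p) + fderiv ℝ Z p (fderiv ℝ Y p u)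
        + l • (fderiv ℝ A p u (Y p) (Z p) + A p (fderiv ℝ Y p u) (Z p)
          + A p (Y p) (fderiv ℝ Z p u)) := by
  have h : HasFDerivAt (nabLam A l Y Z) _ p :=
    (hDZ.hasFDerivAt.clm_apply hY.hasFDerivAt).add
      (((hA.hasFDerivAt.clm_apply hY.hasFDerivAt).clm_apply hZ.hasFDerivAt).const_smul l)
  rw [h.fderiv]
  simp only [add_apply, smul_apply, ContinuousLinearMap.coe_comp, Function.comp_apply,
    ContinuousLinearMap.flip_apply]
  module

theorem nabLam_curvature_apply (hA : Differentiable ℝ A) (hX : Differentiable ℝ X)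
    (hY : Differentiable ℝ Y) (hZ : ContDiff ℝ 2 Z) (l : ℝ) (p : E) :
    nabLam A l X (nabLam A l Y Z) p - nabLam A l Y (nabLam A l X Z) p
        - nabLam A l (lieB X Y) Z p
      = l • (fderiv ℝ A p (X p) (Y p) (Z p) - fderiv ℝ A p (Y p) (X p) (Z p))
        + (l * l) • (A p (X p) (A p (Y p) (Z p)) - A p (Y p) (A p (X p) (Z p))) := by
  have hZ₁ : Differentiable ℝ Z := hZ.differentiable (by simp)
  have hDZ : Differentiable ℝ (fderiv ℝ Z) :=
    (hZ.fderiv_right (m := 1) le_rfl).differentiable one_ne_zero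
  have hYZ := fderiv_nabLam_apply (hA p) (hY p) (hZ₁ p) (hDZ p) l (X p)
  have hXZ := fderiv_nabLam_apply (hA p) (hX p) (hZ₁ p) (hDZ p) l (Y p)
  have hschwarz := hZ.contDiffAt.isSymmSndFDerivAt (x := p) (by simp) (X p) (Y p)
  unfold nabLam mulA lieB at *
  rw [hYZ, hXZ, hschwarz]
  simp only [map_sub, map_add, map_smul, sub_apply]
  module

end Pencil

/-- all connections of the pencil are torsionless and flat iff
`(E, ∘, ∇)` is an F-manifold with compatible flat structure (commutative,
associative, with a smooth global vector potential). -/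
theorem stmt5 {E : Type*} [NormedAddCommGroup E] [NormedSpace ℝ E] [FiniteDimensional ℝ E]
    (A : E → (E →L[ℝ] E →L[ℝ] E)) (hA : ContDiff ℝ ∞ A) :
    ((∀ (l : ℝ) (X Y : E → E), ContDiff ℝ ∞ X → ContDiff ℝ ∞ Y →
        (fun p => nabLam A l X Y p - nabLam A l Y X p) = lieB X Y) ∧
     (∀ (l : ℝ) (X Y Z : E → E), ContDiff ℝ ∞ X → ContDiff ℝ ∞ Y → ContDiff ℝ ∞ Z →
        (fun p => nabLam A l X (nabLam A l Y Z) p - nabLam A l Y (nabLam A l X Z) p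
          - nabLam A l (lieB X Y) Z p) = fun _ => (0 : E))) ↔
    ((∀ p u v : E, A p u v = A p v u) ∧
     (∀ p u v w : E, A p (A p u v) w = A p u (A p v w)) ∧
     (∃ C : E → E, ContDiff ℝ ∞ C ∧
        ∀ p v w : E, A p v w = fderiv ℝ (fderiv ℝ C) p v w)) := by
  have hA₁ : Differentiable ℝ A := hA.differentiable (by simp)
  constructor
  · rintro ⟨htor, hflat⟩
    have hcomm : ∀ p u v : E, A p u v = A p v u := fun p u v => by
      have h := congrFun (htor 1 (fun _ => u) (fun _ => v) contDiff_const contDiff_const) p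
      rw [nabLam_sub_nabLam_apply, add_eq_left, one_smul, sub_eq_zero] at h
      exact h
    have hcurv : ∀ p u v w : E, (fderiv ℝ A p u v w - fderiv ℝ A p v u w = 0) ∧
        A p u (A p v w) - A p v (A p u w) = 0 := fun p u v w =>
      eq_zero_of_forall_smul_add_mul_self_smul_eq_zero fun l => by
        rw [← nabLam_curvature_apply hA₁ (differentiable_const u) (differentiable_const v)
          contDiff_const]
        exact congrFun (hflat l _ _ (fun _ => w) contDiff_const contDiff_const contDiff_const) p
    refine ⟨hcomm, fun p => (assoc_iff_left_comm_of_comm _ (hcomm p)).2 fun u v w =>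
      sub_eq_zero.1 (hcurv p u v w).2, (exists_potential_iff_fderiv_symmetric hA hcomm).2
      fun p u v => ContinuousLinearMap.ext fun w => sub_eq_zero.1 (hcurv p u v w).1⟩
  · rintro ⟨hcomm, hassoc, hpot⟩
    have hDA := (exists_potential_iff_fderiv_symmetric hA hcomm).1 hpot
    have hleft := fun p => (assoc_iff_left_comm_of_comm _ (hcomm p)).1 (hassoc p)
    refine ⟨fun l X Y _ _ => funext fun p => ?_, fun l X Y Z hX hY hZ => funext fun p => ?_⟩
    · rw [nabLam_sub_nabLam_apply, hcomm p (X p), sub_self, smul_zero, add_zero]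
    · rw [nabLam_curvature_apply hA₁ (hX.differentiable (by simp)) (hY.differentiable (by simp))
        (hZ.of_le ENat.LEInfty.out), hDA, hleft, sub_self, sub_self,
        smul_zero, smul_zero, add_zero]
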